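/- One NSFD step preserves positivity: if s, i, r ≥ 0, d < 1, φ > 0, and β, γ, μ > 0, ω ≥ 0, then the updated values s⁺ = (s + ω r⁺ φ)/(1 + β i φ/(1-d)), i⁺ = (i + β s⁺ i φ/(1-d))/(1 + (γ+μ)φ), r⁺ = (r + γ i⁺ φ)/(1 + ωφ) (computed in the order r⁺ uses i⁺ and s⁺ uses r⁺ appropriately, i.e., solving the sequential scheme) are all nonnegative. -/

import Mathlib

theorem nsfd_step_positivity
    (β γ μ ω φ s i r d s' i' r' : ℝ)
    (hβ : 0 < β) (hγ : 0 < γ) (hμ : 0 < μ) (hω : 0 ≤ ω) (hφ : 0 < φ)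
    (hs : 0 ≤ s) (hi : 0 ≤ i) (hr : 0 ≤ r) (hd : d < 1)
    (hs' : s' = (s + ω * r' * φ) / (1 + β * i * φ / (1 - d)))
    (hi' : i' = (i + β * s' * i * φ / (1 - d)) / (1 + (γ + μ) * φ))
    (hr' : r' = (r + γ * i' * φ) / (1 + ω * φ)) :
    0 ≤ s' ∧ 0 ≤ i' ∧ 0 ≤ r' := by
  have hD : 0 < 1 - d := by linarith
  have hA : 0 ≤ β * i * φ / (1 - d) := by positivity
  set A := β * i * φ / (1 - d) with hAdef
  have hApos : 0 < 1 + A := by linarith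
  have hB : 0 < 1 + (γ + μ) * φ := by positivity
  have hC : 0 < 1 + ω * φ := by positivity
  have h1 : s' * (1 + A) = s + ω * r' * φ := by
    rw [hs']; field_simp
  have h2 : i' * (1 + (γ + μ) * φ) = i + A * s' := by
    rw [hi', hAdef]; field_simp
  have h3 : r' * (1 + ω * φ) = r + γ * i' * φ := by
    rw [hr']; field_simp
  have hBC : 0 < (1 + (γ + μ) * φ) * (1 + ω * φ) - ω * γ * φ ^ 2 := by
    nlinarith [mul_nonneg hμ.le (mul_nonneg hω (sq_nonneg φ)),
      mul_nonneg (add_nonneg hγ.le hμ.le) hφ.le, mul_nonneg hω hφ.le]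
  have hK : 0 < (1 + A) * ((1 + (γ + μ) * φ) * (1 + ω * φ)) - A * (ω * γ * φ ^ 2) := by
    nlinarith [mul_nonneg hA hBC.le, mul_pos hB hC]
  have hEq : s' * ((1 + A) * ((1 + (γ + μ) * φ) * (1 + ω * φ)) - A * (ω * γ * φ ^ 2)) =
      s * ((1 + (γ + μ) * φ) * (1 + ω * φ)) + ω * φ * r * (1 + (γ + μ) * φ)
        + ω * γ * φ ^ 2 * i := by
    linear_combination ((1 + (γ + μ) * φ) * (1 + ω * φ)) * h1
      + (ω * φ * (1 + (γ + μ) * φ)) * h3 + (ω * γ * φ ^ 2) * h2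
  have hRHS : 0 ≤ s * ((1 + (γ + μ) * φ) * (1 + ω * φ)) + ω * φ * r * (1 + (γ + μ) * φ)
      + ω * γ * φ ^ 2 * i := by positivity
  have hs0 : 0 ≤ s' := (mul_nonneg_iff_of_pos_right hK).mp (hEq ▸ hRHS)
  have hi0 : 0 ≤ i' := (mul_nonneg_iff_of_pos_right hB).mp
    (h2 ▸ add_nonneg hi (mul_nonneg hA hs0))
  have hr0 : 0 ≤ r' := (mul_nonneg_iff_of_pos_right hC).mp
    (h3 ▸ add_nonneg hr (mul_nonneg (mul_nonneg hγ.le hi0) hφ.le))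
  exact ⟨hs0, hi0, hr0⟩
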